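/- arXiv:2605.18024 — 2 statements merged into one kernel-verified Lean document; each statement's English description precedes it below -/
import Mathlib

section
/- The CLUB upper bound on conditional mutual information specialized to the true conditional distribution: for discrete random variables X, Y, Z, I(X ; Y | Z) ≤ E_{p(x,y,z)}[log p(x | y, z)] − E_{p(x,z) p(y|z)}[log p(x | y, z)], where in the second expectation Y is drawn independently of X given Z from its conditional marginal. -/
open scoped Classical BigOperators

/-- `μ` is a probability mass function on the finite sample space `Ω`. -/
def IsPMF {Ω : Type*} [Fintype Ω] (μ : Ω → ℝ) : Prop :=
  (∀ ω, 0 ≤ μ ω) ∧ ∑ ω, μ ω = 1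

/-- Probability that the random variable `X` takes value `x` under `μ`. -/
noncomputable def pmass {Ω : Type*} [Fintype Ω] {α : Type*} (μ : Ω → ℝ) (X : Ω → α) (x : α) : ℝ :=
  ∑ ω, if X ω = x then μ ω else 0

/-- Shannon entropy of `X` under `μ` (with the convention `0 * log 0 = 0`). -/
noncomputable def H {Ω : Type*} [Fintype Ω] {α : Type*} [Fintype α]
    (μ : Ω → ℝ) (X : Ω → α) : ℝ :=
  - ∑ x : α, pmass μ X x * Real.log (pmass μ X x)

/-- Conditional Shannon entropy `H(X | Z) = H(X, Z) - H(Z)`. -/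
noncomputable def condH {Ω : Type*} [Fintype Ω] {α β : Type*} [Fintype α] [Fintype β]
    (μ : Ω → ℝ) (X : Ω → α) (Z : Ω → β) : ℝ :=
  H μ (fun ω => (X ω, Z ω)) - H μ Z

/-- Conditional mutual information `I(X ; Y | Z) = H(X | Z) - H(X | Y, Z)`. -/
noncomputable def condMI {Ω : Type*} [Fintype Ω] {α β γ : Type*} [Fintype α] [Fintype β] [Fintype γ]
    (μ : Ω → ℝ) (X : Ω → α) (Y : Ω → β) (Z : Ω → γ) : ℝ :=
  condH μ X Z - condH μ X (fun ω => (Y ω, Z ω))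


/-!
The first CLUB term is `-H(X | Y, Z)`, so the bound reduces to
`H(X | Z) ≤ -E_{p(x,z) p(y|z)} log p(x | y, z)`. For fixed `(x, z)`, Jensen's inequality for the
concave logarithm with weights `p(y | z)` gives
`∑ y, p(y | z) log p(x | y, z) ≤ log ∑ y, p(y | z) p(x | y, z) = log p(x | z)`,
and averaging over `p(x, z)` yields `-H(X | Z)`.
-/

open Finset Real

theorem sum_div_mul_log_div_le_log_sum_div {ι : Type*} (s : Finset ι) {p q : ι → ℝ}
    (hp : ∀ i ∈ s, 0 < p i) (hq : ∀ i ∈ s, 0 < q i) :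
    ∑ i ∈ s, q i / (∑ j ∈ s, q j) * log (p i / q i) ≤ log ((∑ i ∈ s, p i) / ∑ i ∈ s, q i) := by
  rcases s.eq_empty_or_nonempty with rfl | hs
  · simp
  have hQ : 0 < ∑ j ∈ s, q j := sum_pos hq hs
  have jensen := strictConcaveOn_log_Ioi.concaveOn.le_map_sum (t := s)
    (w := fun i => q i / ∑ j ∈ s, q j) (p := fun i => p i / q i)
    (fun i hi => (div_pos (hq i hi) hQ).le)
    (by rw [← sum_div, div_self hQ.ne'])
    (fun i hi => Set.mem_Ioi.2 (div_pos (hp i hi) (hq i hi)))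
  have hmean : ∑ i ∈ s, q i / (∑ j ∈ s, q j) * (p i / q i) = (∑ i ∈ s, p i) / ∑ i ∈ s, q i := by
    rw [sum_div]
    refine sum_congr rfl fun i hi => ?_
    field_simp [(hq i hi).ne']
  simpa only [smul_eq_mul, hmean] using jensen

section pmass

variable {Ω : Type*} [Fintype Ω] {α β γ : Type*}

theorem sum_pmass_pair_left [Fintype α] (μ : Ω → ℝ) (A : Ω → α) (B : Ω → β) (b : β) :
    ∑ a, pmass μ (fun ω => (A ω, B ω)) (a, b) = pmass μ B b := by
  unfold pmass
  rw [sum_comm]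
  simp [Prod.ext_iff, ite_and]

theorem sum_pmass_triple_mid [Fintype β] (μ : Ω → ℝ) (A : Ω → α) (B : Ω → β) (C : Ω → γ)
    (a : α) (c : γ) :
    ∑ b, pmass μ (fun ω => (A ω, B ω, C ω)) (a, b, c) = pmass μ (fun ω => (A ω, C ω)) (a, c) := by
  unfold pmass
  rw [sum_comm]
  simp [Prod.ext_iff, ite_and]

theorem pmass_pos_of_forall_pair_pos [Fintype α] [Nonempty α] {μ : Ω → ℝ} {A : Ω → α}
    {B : Ω → β} (h : ∀ a b, 0 < pmass μ (fun ω => (A ω, B ω)) (a, b)) (b : β) :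
    0 < pmass μ B b :=
  sum_pmass_pair_left μ A B b ▸ sum_pos (fun a _ => h a b) univ_nonempty

theorem condH_eq_neg_sum_mul_log_div [Fintype α] [Fintype β] (μ : Ω → ℝ) (A : Ω → α)
    (B : Ω → β) (hAB : ∀ a b, pmass μ (fun ω => (A ω, B ω)) (a, b) ≠ 0)
    (hB : ∀ b, pmass μ B b ≠ 0) :
    condH μ A B = -∑ a, ∑ b, pmass μ (fun ω => (A ω, B ω)) (a, b) *
      log (pmass μ (fun ω => (A ω, B ω)) (a, b) / pmass μ B b) := by
  have hcross : ∑ a, ∑ b, pmass μ (fun ω => (A ω, B ω)) (a, b) * log (pmass μ B b)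
      = ∑ b, pmass μ B b * log (pmass μ B b) := by
    rw [sum_comm]
    simp only [← sum_mul, sum_pmass_pair_left]
  simp only [condH, H, Fintype.sum_prod_type, log_div (hAB _ _) (hB _), mul_sub,
    sum_sub_distrib, hcross]
  ring

theorem sum_resampled_mul_log_condProb_le_neg_condH [Fintype α] [Fintype β] [Fintype γ]
    [Nonempty β] (μ : Ω → ℝ) (X : Ω → α) (Y : Ω → β) (Z : Ω → γ)
    (hpos : ∀ x y z, 0 < pmass μ (fun ω => (X ω, Y ω, Z ω)) (x, y, z))
    (hYZ : ∀ y z, 0 < pmass μ (fun ω => (Y ω, Z ω)) (y, z)) :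
    ∑ x, ∑ y, ∑ z, pmass μ (fun ω => (X ω, Z ω)) (x, z) *
        (pmass μ (fun ω => (Y ω, Z ω)) (y, z) / pmass μ Z z) *
        log (pmass μ (fun ω => (X ω, Y ω, Z ω)) (x, y, z) / pmass μ (fun ω => (Y ω, Z ω)) (y, z))
      ≤ -condH μ X Z := by
  have hXZ : ∀ x z, 0 < pmass μ (fun ω => (X ω, Z ω)) (x, z) := fun x z =>
    sum_pmass_triple_mid μ X Y Z x z ▸ sum_pos (fun y _ => hpos x y z) univ_nonempty
  have hZ : ∀ z, 0 < pmass μ Z z := pmass_pos_of_forall_pair_pos hYZ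
  rw [condH_eq_neg_sum_mul_log_div μ X Z (fun x z => (hXZ x z).ne') (fun z => (hZ z).ne'),
    neg_neg]
  refine sum_le_sum fun x _ => ?_
  rw [sum_comm]
  refine sum_le_sum fun z _ => ?_
  simp only [mul_assoc, ← mul_sum]
  refine mul_le_mul_of_nonneg_left ?_ (hXZ x z).le
  have jensen := sum_div_mul_log_div_le_log_sum_div univ (fun y _ => hpos x y z)
    (fun y _ => hYZ y z)
  rwa [sum_pmass_triple_mid, sum_pmass_pair_left] at jensen

end pmass

theorem condMI_le_CLUB_general {Ω : Type*} [Fintype Ω]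
    {α β γ : Type*} [Fintype α] [Fintype β] [Fintype γ]
    (μ : Ω → ℝ)
    (X : Ω → α) (Y : Ω → β) (Z : Ω → γ)
    (hpos : ∀ x y z, 0 < pmass μ (fun ω => (X ω, Y ω, Z ω)) (x, y, z)) :
    condMI μ X Y Z ≤
      (∑ x : α, ∑ y : β, ∑ z : γ,
          pmass μ (fun ω => (X ω, Y ω, Z ω)) (x, y, z) *
            Real.log (pmass μ (fun ω => (X ω, Y ω, Z ω)) (x, y, z)
              / pmass μ (fun ω => (Y ω, Z ω)) (y, z)))
      - (∑ x : α, ∑ y : β, ∑ z : γ,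
          pmass μ (fun ω => (X ω, Z ω)) (x, z) *
            (pmass μ (fun ω => (Y ω, Z ω)) (y, z) / pmass μ Z z) *
            Real.log (pmass μ (fun ω => (X ω, Y ω, Z ω)) (x, y, z)
              / pmass μ (fun ω => (Y ω, Z ω)) (y, z))) := by
  rcases isEmpty_or_nonempty Ω with _ | ⟨⟨ω⟩⟩
  · simp [condMI, condH, H, pmass]
  have : Nonempty α := ⟨X ω⟩
  have : Nonempty β := ⟨Y ω⟩
  have hYZ : ∀ y z, 0 < pmass μ (fun ω => (Y ω, Z ω)) (y, z) :=
    fun y z => pmass_pos_of_forall_pair_pos (A := X) (fun x yz => hpos x yz.1 yz.2) (y, z)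
  have hcross := sum_resampled_mul_log_condProb_le_neg_condH μ X Y Z hpos hYZ
  rw [condMI, condH_eq_neg_sum_mul_log_div μ X (fun ω => (Y ω, Z ω))
    (fun x yz => (hpos x yz.1 yz.2).ne') (fun yz => (hYZ yz.1 yz.2).ne')]
  simp only [Fintype.sum_prod_type]
  linarith

/-- The CLUB upper bound on conditional mutual information, specialized to the true
conditional distribution: `I(X ; Y | Z)` is at most the difference between the expected
conditional log-likelihood `log p(x | y, z)` under the joint distribution `p(x, y, z)`
and under the distribution `p(x, z) p(y | z)` where `Y` is resampled independently of
`X` given `Z`. -/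
theorem condMI_le_CLUB {Ω : Type*} [Fintype Ω]
    {α β γ : Type*} [Fintype α] [Fintype β] [Fintype γ]
    (μ : Ω → ℝ) (hμ : IsPMF μ)
    (X : Ω → α) (Y : Ω → β) (Z : Ω → γ)
    (hpos : ∀ x y z, 0 < pmass μ (fun ω => (X ω, Y ω, Z ω)) (x, y, z)) :
    condMI μ X Y Z ≤
      (∑ x : α, ∑ y : β, ∑ z : γ,
          pmass μ (fun ω => (X ω, Y ω, Z ω)) (x, y, z) *
            Real.log (pmass μ (fun ω => (X ω, Y ω, Z ω)) (x, y, z)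
              / pmass μ (fun ω => (Y ω, Z ω)) (y, z)))
      - (∑ x : α, ∑ y : β, ∑ z : γ,
          pmass μ (fun ω => (X ω, Z ω)) (x, z) *
            (pmass μ (fun ω => (Y ω, Z ω)) (y, z) / pmass μ Z z) *
            Real.log (pmass μ (fun ω => (X ω, Y ω, Z ω)) (x, y, z)
              / pmass μ (fun ω => (Y ω, Z ω)) (y, z))) :=
  condMI_le_CLUB_general μ X Y Z hpos
end

section
/- Nonnegativity of the CLUB-style gap: for discrete random variables X, Y, Z with strictly positive relevant conditionals, the gap E_{p(x,y,z)}[log p(x|y,z)] − E_{p(z)p(x|z)p(y|z)}[log p(x|y,z)] − I(X;Y|Z) is always ≥ 0. -/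
open scoped Classical BigOperators

private lemma marg_fst' {Ω α β : Type*} [Fintype Ω] [Fintype α]
    (μ : Ω → ℝ) (X : Ω → α) (W : Ω → β) (w : β) :
    pmass μ W w = ∑ x, pmass μ (fun ω => (X ω, W ω)) (x, w) := by
  unfold pmass
  rw [Finset.sum_comm]
  refine Finset.sum_congr rfl fun ω _ => ?_
  simp [Prod.ext_iff, ite_and, Finset.sum_ite_eq]

private lemma marg_snd' {Ω α β γ : Type*} [Fintype Ω] [Fintype β]
    (μ : Ω → ℝ) (X : Ω → α) (Y : Ω → β) (Z : Ω → γ) (x : α) (z : γ) :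
    pmass μ (fun ω => (X ω, Z ω)) (x, z) = ∑ y, pmass μ (fun ω => (X ω, Y ω, Z ω)) (x, y, z) := by
  unfold pmass
  rw [Finset.sum_comm]
  refine Finset.sum_congr rfl fun ω _ => ?_
  by_cases h1 : X ω = x <;> by_cases h2 : Z ω = z <;>
    simp [Prod.ext_iff, h1, h2, ite_and, Finset.sum_ite_eq]


private lemma sum_rot3 {α β γ : Type*} [Fintype α] [Fintype β] [Fintype γ]
    (f : α → β → γ → ℝ) :
    (∑ x, ∑ y, ∑ z, f x y z) = ∑ z, ∑ x, ∑ y, f x y z :=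
  calc (∑ x, ∑ y, ∑ z, f x y z) = ∑ x, ∑ z, ∑ y, f x y z :=
        Finset.sum_congr rfl fun _ _ => Finset.sum_comm
    _ = ∑ z, ∑ x, ∑ y, f x y z := Finset.sum_comm

private lemma club_core {α β γ : Type*} [Fintype α] [Fintype β] [Fintype γ]
    [Nonempty α] [Nonempty β]
    (P : α → β → γ → ℝ) (hP : ∀ x y z, 0 < P x y z)
    (Q : β → γ → ℝ) (S : α → γ → ℝ) (R : γ → ℝ)
    (hQ : ∀ y z, Q y z = ∑ x, P x y z)
    (hS : ∀ x z, S x z = ∑ y, P x y z)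
    (hR : ∀ z, R z = ∑ x, ∑ y, P x y z) :
    0 ≤ (∑ x, ∑ y, ∑ z, P x y z * Real.log (P x y z / Q y z))
      - (∑ x, ∑ y, ∑ z, R z * (S x z / R z) * (Q y z / R z) * Real.log (P x y z / Q y z))
      - (((- ∑ x, ∑ z, S x z * Real.log (S x z)) - (- ∑ z, R z * Real.log (R z)))
        - ((- ∑ x, ∑ y, ∑ z, P x y z * Real.log (P x y z))
            - (- ∑ y, ∑ z, Q y z * Real.log (Q y z)))) := by
  have hQpos : ∀ y z, 0 < Q y z := fun y z => by
    rw [hQ]; exact Finset.sum_pos (fun x _ => hP x y z) Finset.univ_nonempty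
  have hSpos : ∀ x z, 0 < S x z := fun x z => by
    rw [hS]; exact Finset.sum_pos (fun y _ => hP x y z) Finset.univ_nonempty
  have hRpos : ∀ z, 0 < R z := fun z => by
    rw [hR]
    exact Finset.sum_pos (fun x _ => Finset.sum_pos (fun y _ => hP x y z) Finset.univ_nonempty)
      Finset.univ_nonempty
  have hSR : ∀ z, (∑ x, S x z) = R z := fun z => by
    rw [hR]; exact Finset.sum_congr rfl fun x _ => hS x z
  have hQR : ∀ z, (∑ y, Q y z) = R z := fun z => by
    simp_rw [hQ, hR]; exact Finset.sum_comm
  -- Step 1: first sum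
  have hA : (∑ x, ∑ y, ∑ z, P x y z * Real.log (P x y z / Q y z))
      = (∑ x, ∑ y, ∑ z, P x y z * Real.log (P x y z))
        - (∑ y, ∑ z, Q y z * Real.log (Q y z)) := by
    have h1 : ∀ x y z, P x y z * Real.log (P x y z / Q y z)
        = P x y z * Real.log (P x y z) - P x y z * Real.log (Q y z) := fun x y z => by
      rw [Real.log_div (hP x y z).ne' (hQpos y z).ne', mul_sub]
    simp_rw [h1, Finset.sum_sub_distrib]
    congr 1
    rw [Finset.sum_comm]
    refine Finset.sum_congr rfl fun y _ => ?_
    rw [Finset.sum_comm]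
    exact Finset.sum_congr rfl fun z _ => by rw [hQ, Finset.sum_mul]
  -- Step 2: second sum
  have hB : (∑ x, ∑ y, ∑ z, R z * (S x z / R z) * (Q y z / R z) * Real.log (P x y z / Q y z))
      = ∑ z, ∑ x, S x z * (∑ y, (Q y z / R z) * Real.log (P x y z / Q y z)) := by
    rw [sum_rot3]
    refine Finset.sum_congr rfl fun z _ => Finset.sum_congr rfl fun x _ => ?_
    rw [Finset.mul_sum]
    refine Finset.sum_congr rfl fun y _ => ?_
    have h := (hRpos z).ne'
    field_simp
  rw [hA, hB]
  have hC : (∑ x, ∑ y, ∑ z, P x y z * Real.log (P x y z))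
        - (∑ y, ∑ z, Q y z * Real.log (Q y z))
      - (((- ∑ x, ∑ z, S x z * Real.log (S x z)) - (- ∑ z, R z * Real.log (R z)))
        - ((- ∑ x, ∑ y, ∑ z, P x y z * Real.log (P x y z))
            - (- ∑ y, ∑ z, Q y z * Real.log (Q y z))))
      = ∑ z, ∑ x, S x z * (Real.log (S x z) - Real.log (R z)) := by
    have h1 : (∑ x, ∑ z, S x z * Real.log (S x z))
        = ∑ z, ∑ x, S x z * Real.log (S x z) := Finset.sum_comm
    have h2 : (∑ z, R z * Real.log (R z))
        = ∑ z, ∑ x, S x z * Real.log (R z) := by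
      refine Finset.sum_congr rfl fun z _ => ?_
      rw [← hSR z, Finset.sum_mul]
    rw [h1, h2]
    simp_rw [mul_sub, Finset.sum_sub_distrib]
    ring
  have key : ∀ z x, (∑ y, Q y z / R z * Real.log (P x y z / Q y z))
      ≤ Real.log (S x z) - Real.log (R z) := by
    intro z x
    have hw0 : ∀ y ∈ Finset.univ, (0:ℝ) ≤ Q y z / R z := fun y _ =>
      div_nonneg (hQpos y z).le (hRpos z).le
    have hw1 : ∑ y : β, Q y z / R z = 1 := by
      rw [← Finset.sum_div, hQR z, div_self (hRpos z).ne']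
    have hmem : ∀ y ∈ Finset.univ, P x y z / Q y z ∈ Set.Ioi (0:ℝ) := fun y _ =>
      div_pos (hP x y z) (hQpos y z)
    have hj := (strictConcaveOn_log_Ioi.concaveOn).le_map_sum hw0 hw1 hmem
    simp only [smul_eq_mul] at hj
    have hsum : ∑ y : β, Q y z / R z * (P x y z / Q y z) = S x z / R z := by
      have h1 : ∀ y, Q y z / R z * (P x y z / Q y z) = P x y z / R z := fun y => by
        have hq := (hQpos y z).ne'
        have hr := (hRpos z).ne'
        field_simp
      simp_rw [h1]
      rw [← Finset.sum_div, ← hS]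
    rw [hsum, Real.log_div (hSpos x z).ne' (hRpos z).ne'] at hj
    exact hj
  have hIneq : (∑ z, ∑ x, S x z * ∑ y, Q y z / R z * Real.log (P x y z / Q y z))
      ≤ ∑ z, ∑ x, S x z * (Real.log (S x z) - Real.log (R z)) :=
    Finset.sum_le_sum fun z _ => Finset.sum_le_sum fun x _ =>
      mul_le_mul_of_nonneg_left (key z x) (hSpos x z).le
  linarith [hC]

/-- Nonnegativity of the CLUB-style gap: with the true conditional model, the CLUB
quantity `E_{p(x,y,z)}[log p(x|y,z)] − E_{p(z) p(x|z) p(y|z)}[log p(x|y,z)]` (where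
in the second expectation `X` and `Y` are drawn conditionally independently given
`Z` from their conditional marginals) exceeds `I(X ; Y | Z)` by a nonnegative
amount; in particular the gap is always `≥ 0`. -/
theorem CLUB_gap_nonneg {Ω : Type*} [Fintype Ω]
    {α β γ : Type*} [Fintype α] [Fintype β] [Fintype γ]
    (μ : Ω → ℝ) (hμ : IsPMF μ)
    (X : Ω → α) (Y : Ω → β) (Z : Ω → γ)
    (hpos : ∀ x y z, 0 < pmass μ (fun ω => (X ω, Y ω, Z ω)) (x, y, z)) :
    0 ≤ (∑ x : α, ∑ y : β, ∑ z : γ,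
          pmass μ (fun ω => (X ω, Y ω, Z ω)) (x, y, z) *
            Real.log (pmass μ (fun ω => (X ω, Y ω, Z ω)) (x, y, z)
              / pmass μ (fun ω => (Y ω, Z ω)) (y, z)))
      - (∑ x : α, ∑ y : β, ∑ z : γ,
          pmass μ Z z * (pmass μ (fun ω => (X ω, Z ω)) (x, z) / pmass μ Z z) *
            (pmass μ (fun ω => (Y ω, Z ω)) (y, z) / pmass μ Z z) *
            Real.log (pmass μ (fun ω => (X ω, Y ω, Z ω)) (x, y, z)
              / pmass μ (fun ω => (Y ω, Z ω)) (y, z)))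
      - condMI μ X Y Z := by
  -- The sample space is nonempty (total mass is 1), hence so are α, β, γ.
  have hΩ : Nonempty Ω := by
    by_contra h
    rw [not_nonempty_iff] at h
    have := hμ.2
    simp [Finset.univ_eq_empty] at this
  haveI : Nonempty α := ⟨X (Classical.arbitrary Ω)⟩
  haveI : Nonempty β := ⟨Y (Classical.arbitrary Ω)⟩
  haveI : Nonempty γ := ⟨Z (Classical.arbitrary Ω)⟩
  set P : α → β → γ → ℝ := fun x y z => pmass μ (fun ω => (X ω, Y ω, Z ω)) (x, y, z) with hPdef
  have hq : ∀ y z, pmass μ (fun ω => (Y ω, Z ω)) (y, z) = ∑ x, P x y z := fun y z =>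
    marg_fst' μ X (fun ω => (Y ω, Z ω)) (y, z)
  have hs : ∀ x z, pmass μ (fun ω => (X ω, Z ω)) (x, z) = ∑ y, P x y z := fun x z =>
    marg_snd' μ X Y Z x z
  have hr : ∀ z, pmass μ Z z = ∑ x, ∑ y, P x y z := fun z => by
    rw [marg_fst' μ X Z z]
    exact Finset.sum_congr rfl fun x _ => marg_snd' μ X Y Z x z
  have hMI : condMI μ X Y Z
      = (((- ∑ x, ∑ z, pmass μ (fun ω => (X ω, Z ω)) (x, z)
              * Real.log (pmass μ (fun ω => (X ω, Z ω)) (x, z)))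
          - (- ∑ z, pmass μ Z z * Real.log (pmass μ Z z)))
        - ((- ∑ x, ∑ y, ∑ z, P x y z * Real.log (P x y z))
            - (- ∑ y, ∑ z, pmass μ (fun ω => (Y ω, Z ω)) (y, z)
                * Real.log (pmass μ (fun ω => (Y ω, Z ω)) (y, z))))) := by
    simp only [condMI, condH, H, Fintype.sum_prod_type, hPdef]
  rw [hMI]
  have := club_core P hpos
    (fun y z => pmass μ (fun ω => (Y ω, Z ω)) (y, z))
    (fun x z => pmass μ (fun ω => (X ω, Z ω)) (x, z))
    (fun z => pmass μ Z z) hq hs hr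
  exact this
end
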